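/- Let d ≥ 1, δ ∈ (0,1), T₀ > 0 and C_Z > 0. Then there exist C > 0 and ε₀ ∈ (0,1] such that for every ε ∈ (0,ε₀], every continuous Ẑ : [0,T₀] → ℓ¹_{1−δ/2}(ℤ^d) with sup_{T∈[0,T₀]} ‖Ẑ(T)‖_{ℓ¹_{1−δ/2}} ≤ C_Z, and every t ∈ [0, T₀/ε²]: Σ_{K∈ℤ^d, ε|K| ≤ 1/10} |∫₀^t e^{λ(e₁+εK)(t−τ)} (−4ε⁴K₁³ − ε⁵K₁⁴) Ẑ(K, ε²τ) dτ| ≤ C ε^{2 − 3δ/2}. -/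

import Mathlib

/-- The weight `(1 + |K|²)^{r/2}` on the lattice `ℤ^d`. -/
noncomputable def wt (d : ℕ) (r : ℝ) (K : Fin d → ℤ) : ℝ :=
  (1 + ∑ i, ((K i : ℝ)) ^ 2) ^ (r / 2)

/-- Continuity of `T ↦ Z(T)` on `[0,T₀]` with respect to the `ℓ¹_r` norm. -/
def NormContOn (d : ℕ) (r T₀ : ℝ) (B : ℝ → (Fin d → ℤ) → ℂ) : Prop :=
  ∀ T ∈ Set.Icc (0 : ℝ) T₀, ∀ η > 0, ∃ ν > 0, ∀ T' ∈ Set.Icc (0 : ℝ) T₀,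
    |T' - T| < ν → ∑' K : Fin d → ℤ, ‖B T' K - B T K‖ * wt d r K < η

/-!
On the support of the mode filter `|εK₁| ≤ 1/10`, so the symbol obeys `λ(e₁ + εK) ≤ -(εK₁)²`
and the multiplier is at most `5 ε⁴ |K₁|³ = 5 ε^(1+r) |K₁|^r y^p` with `r = 1 - δ/2`,
`y = (εK₁)²` and `p = (3 - r)/2`. Uniformly in `y ≤ 1`, `y^p e^(-y s) = O((1 + s)^(-p))`, which is
integrable in time because `p > 1`. The weight `|K₁|^r` is absorbed by the `ℓ¹_r` norm of `Ẑ`,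
so the whole sum is `O(ε^(1+r)) = O(ε^(2-δ/2))`.
-/

open Real Set intervalIntegral

lemma sq_rpow_div_two (x a : ℝ) : (x ^ 2) ^ (a / 2) = |x| ^ a := by
  rw [rpow_div_two_eq_sqrt a (sq_nonneg x), sqrt_sq_eq_abs]

lemma critical_symbol_le_neg_sq {y S : ℝ} (hy : |y| ≤ 1) (hS : 0 ≤ S) :
    -(1 - (1 + y) ^ 2) ^ 2 - 4 * S ≤ -y ^ 2 := by
  obtain ⟨hy₁, hy₂⟩ := abs_le.mp hy
  -- `(1 - (1 + y)²)² - y² = y² (1 + y) (3 + y)`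
  nlinarith [mul_nonneg (sq_nonneg y)
    (mul_nonneg (by linarith : 0 ≤ 1 + y) (by linarith : 0 ≤ 3 + y))]

lemma abs_residual_multiplier_le {ε c : ℝ} (hε : 0 ≤ ε) (hεc : |ε * c| ≤ 1) :
    |-4 * ε ^ 4 * c ^ 3 - ε ^ 5 * c ^ 4| ≤ 5 * ε ^ 4 * |c| ^ 3 := by
  have hfactor : -4 * ε ^ 4 * c ^ 3 - ε ^ 5 * c ^ 4 = -(ε ^ 4 * c ^ 3 * (4 + ε * c)) := by ring
  have h5 : |4 + ε * c| ≤ 5 := (abs_add_le _ _).trans (by rw [abs_of_pos four_pos]; linarith)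
  rw [hfactor, abs_neg, abs_mul, abs_mul, abs_pow, abs_pow, abs_of_nonneg hε]
  calc ε ^ 4 * |c| ^ 3 * |4 + ε * c| ≤ ε ^ 4 * |c| ^ 3 * 5 := by gcongr
    _ = 5 * ε ^ 4 * |c| ^ 3 := by ring

lemma rpow_le_two_mul_exp {v p : ℝ} (hv : 0 ≤ v) (hp0 : 0 ≤ p) (hp2 : p ≤ 2) :
    v ^ p ≤ 2 * exp v := by
  have hpow : v ^ p ≤ 1 + v ^ 2 := by
    rcases le_total v 1 with hv1 | hv1
    · linarith [rpow_le_one hv hv1 hp0, sq_nonneg v]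
    · have hv2 := rpow_le_rpow_of_exponent_le hv1 hp2
      rw [rpow_two] at hv2
      linarith
  nlinarith [quadratic_le_exp_of_nonneg hv]

lemma rpow_mul_exp_neg_mul_le {y s p : ℝ} (hy0 : 0 ≤ y) (hy1 : y ≤ 1) (hs : 0 ≤ s)
    (hp0 : 0 ≤ p) (hp2 : p ≤ 2) :
    y ^ p * exp (-(y * s)) ≤ 2 * exp 1 * (1 + s) ^ (-p) := by
  have h1s : 0 < 1 + s := by linarith
  have hmul : y ^ p * (1 + s) ^ p ≤ 2 * exp 1 * exp (y * s) := calc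
    y ^ p * (1 + s) ^ p = (y * (1 + s)) ^ p := (mul_rpow hy0 h1s.le).symm
    _ ≤ 2 * exp (y * (1 + s)) := rpow_le_two_mul_exp (by positivity) hp0 hp2
    _ = 2 * exp y * exp (y * s) := by rw [mul_add, mul_one, exp_add]; ring
    _ ≤ 2 * exp 1 * exp (y * s) := by gcongr
  rw [rpow_neg h1s.le, exp_neg, ← div_eq_mul_inv, ← div_eq_mul_inv,
    div_le_div_iff₀ (exp_pos _) (rpow_pos_of_pos h1s p)]
  linarith

lemma pow_four_mul_abs_pow_three_eq {ε : ℝ} (hε : 0 ≤ ε) (c r : ℝ) :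
    ε ^ 4 * |c| ^ 3 = ε ^ (1 + r) * |c| ^ r * ((ε * c) ^ 2) ^ ((3 - r) / 2) := by
  rw [sq_rpow_div_two, abs_mul, abs_of_nonneg hε, mul_rpow hε (abs_nonneg c)]
  calc ε ^ 4 * |c| ^ 3 = ε ^ ((1 + r) + (3 - r)) * |c| ^ (r + (3 - r)) := by
        rw [show (1 + r) + (3 - r) = ((4 : ℕ) : ℝ) by push_cast; ring,
          show r + (3 - r) = ((3 : ℕ) : ℝ) by push_cast; ring, rpow_natCast, rpow_natCast]
    _ = _ := by
        rw [rpow_add' hε (by norm_num), rpow_add' (abs_nonneg c) (by norm_num)]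
        ring

lemma duhamel_kernel_le {ε c S s r : ℝ} (hε : 0 ≤ ε) (hεc : |ε * c| ≤ 1) (hS : 0 ≤ S)
    (hs : 0 ≤ s) (hr₁ : -1 ≤ r) (hr₃ : r ≤ 3) :
    exp ((-(1 - (1 + ε * c) ^ 2) ^ 2 - 4 * S) * s) * |-4 * ε ^ 4 * c ^ 3 - ε ^ 5 * c ^ 4|
      ≤ 10 * exp 1 * ε ^ (1 + r) * |c| ^ r * (1 + s) ^ (-((3 - r) / 2)) := by
  have hy1 : (ε * c) ^ 2 ≤ 1 := by rw [← sq_abs]; exact pow_le_one₀ (abs_nonneg _) hεc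
  have hdecay : exp ((-(1 - (1 + ε * c) ^ 2) ^ 2 - 4 * S) * s) ≤ exp (-((ε * c) ^ 2 * s)) := by
    rw [exp_le_exp, ← neg_mul]
    exact mul_le_mul_of_nonneg_right (critical_symbol_le_neg_sq hεc hS) hs
  calc _ ≤ exp (-((ε * c) ^ 2 * s)) * (5 * ε ^ 4 * |c| ^ 3) :=
        mul_le_mul hdecay (abs_residual_multiplier_le hε hεc) (abs_nonneg _) (exp_pos _).le
    _ = 5 * ε ^ (1 + r) * |c| ^ r * (((ε * c) ^ 2) ^ ((3 - r) / 2) * exp (-((ε * c) ^ 2 * s))) := by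
        rw [mul_assoc 5 (ε ^ 4), pow_four_mul_abs_pow_three_eq hε c r]; ring
    _ ≤ 5 * ε ^ (1 + r) * |c| ^ r * (2 * exp 1 * (1 + s) ^ (-((3 - r) / 2))) := by
        refine mul_le_mul_of_nonneg_left ?_ (by positivity)
        exact rpow_mul_exp_neg_mul_le (sq_nonneg _) hy1 hs (by linarith) (by linarith)
    _ = _ := by ring

lemma one_add_sub_rpow_nonneg {t τ : ℝ} (hτ : τ ≤ t) (q : ℝ) : 0 ≤ (1 + (t - τ)) ^ q :=
  rpow_nonneg (by linarith) q

lemma continuousOn_one_add_sub_rpow (t q : ℝ) :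
    ContinuousOn (fun τ => (1 + (t - τ)) ^ q) (Icc 0 t) :=
  ContinuousOn.rpow_const (by fun_prop) fun τ hτ =>
    Or.inl (by linarith [hτ.2] : (0 : ℝ) < 1 + (t - τ)).ne'

lemma integral_one_add_sub_rpow_neg_le {p t : ℝ} (hp : 1 < p) (ht : 0 ≤ t) :
    ∫ τ in (0 : ℝ)..t, (1 + (t - τ)) ^ (-p) ≤ 1 / (p - 1) := by
  have hsub : ∫ τ in (0 : ℝ)..t, (1 + (t - τ)) ^ (-p) = ∫ u in (1 : ℝ)..(1 + t), u ^ (-p) := by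
    rw [integral_comp_sub_left (fun u => (1 + u) ^ (-p)) t,
      integral_comp_add_left (fun u => u ^ (-p)) 1]
    norm_num
  have hne : (0 : ℝ) ∉ uIcc 1 (1 + t) := by
    rw [uIcc_of_le (by linarith)]; exact fun h => by linarith [h.1]
  rw [hsub, integral_rpow (Or.inr ⟨by linarith, hne⟩), one_rpow,
    show -p + 1 = -(p - 1) by ring, div_neg, ← neg_div, neg_sub]
  gcongr
  linarith [rpow_nonneg (by linarith : (0 : ℝ) ≤ 1 + t) (-(p - 1))]

lemma norm_integral_duhamel_le {E : Type*} [NormedAddCommGroup E] [NormedSpace ℝ E]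
    {ε c S r t : ℝ} {φ : ℝ → E} (hε : 0 ≤ ε) (hεc : |ε * c| ≤ 1) (hS : 0 ≤ S)
    (hr₁ : -1 ≤ r) (hr₃ : r ≤ 3) (ht : 0 ≤ t) (hφ : ContinuousOn φ (Icc 0 t)) :
    ‖∫ τ in (0 : ℝ)..t, (exp ((-(1 - (1 + ε * c) ^ 2) ^ 2 - 4 * S) * (t - τ))
        * (-4 * ε ^ 4 * c ^ 3 - ε ^ 5 * c ^ 4)) • φ τ‖
      ≤ 10 * exp 1 * ε ^ (1 + r) * |c| ^ r
        * ∫ τ in (0 : ℝ)..t, (1 + (t - τ)) ^ (-((3 - r) / 2)) * ‖φ τ‖ := by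
  rw [← integral_const_mul]
  refine norm_integral_le_of_norm_le ht (Filter.Eventually.of_forall fun τ hτ => ?_)
    (ContinuousOn.intervalIntegrable_of_Icc ht
      (continuousOn_const.mul ((continuousOn_one_add_sub_rpow t _).mul hφ.norm)))
  rw [norm_smul, norm_mul, Real.norm_eq_abs, Real.norm_eq_abs, abs_of_pos (exp_pos _),
    ← mul_assoc]
  exact mul_le_mul_of_nonneg_right
    (duhamel_kernel_le hε hεc hS (by linarith [hτ.2]) hr₁ hr₃) (norm_nonneg _)

lemma wt_pos (d : ℕ) (r : ℝ) (K : Fin d → ℤ) : 0 < wt d r K :=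
  rpow_pos_of_pos (by positivity) _

lemma abs_rpow_le_wt {d : ℕ} {r : ℝ} (hr : 0 ≤ r) (K : Fin d → ℤ) (i : Fin d) :
    |(K i : ℝ)| ^ r ≤ wt d r K := by
  rw [← sq_rpow_div_two]
  refine rpow_le_rpow (sq_nonneg _) ?_ (by linarith)
  linarith [Finset.single_le_sum (fun j _ => sq_nonneg ((K j : ℝ))) (Finset.mem_univ i)]

lemma NormContOn.continuousOn_apply {d : ℕ} {r T₀ : ℝ} {Z : ℝ → (Fin d → ℤ) → ℂ}
    (hZ : NormContOn d r T₀ Z)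
    (hZs : ∀ T ∈ Icc (0 : ℝ) T₀, Summable fun K => ‖Z T K‖ * wt d r K) (K : Fin d → ℤ) :
    ContinuousOn (fun T => Z T K) (Icc 0 T₀) := by
  intro T hT
  rw [Metric.continuousWithinAt_iff]
  intro η hη
  obtain ⟨ν, hν, hclose⟩ := hZ T hT (η * wt d r K) (mul_pos hη (wt_pos d r K))
  refine ⟨ν, hν, fun T' hT' hdist => ?_⟩
  have hsum : Summable fun K => ‖Z T' K - Z T K‖ * wt d r K :=
    ((hZs T' hT').add (hZs T hT)).of_nonneg_of_le
      (fun K => mul_nonneg (norm_nonneg _) (wt_pos d r K).le)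
      (fun K => (mul_le_mul_of_nonneg_right (norm_sub_le _ _) (wt_pos d r K).le).trans_eq
        (add_mul _ _ _))
  have hterm := (hsum.le_tsum K fun K _ => mul_nonneg (norm_nonneg _) (wt_pos d r K).le).trans_lt
    (hclose T' hT' (by rwa [Real.dist_eq] at hdist))
  rw [dist_eq_norm]
  exact lt_of_mul_lt_mul_right hterm (wt_pos d r K).le

lemma sum_integral_mul_le {ι : Type*} (F : Finset ι) {k : ℝ → ℝ} {a : ι → ℝ → ℝ} {B t : ℝ}
    (ht : 0 ≤ t) (hk : ContinuousOn k (Icc 0 t)) (hk₀ : ∀ τ ∈ Icc 0 t, 0 ≤ k τ)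
    (ha : ∀ i ∈ F, ContinuousOn (a i) (Icc 0 t)) (hB : ∀ τ ∈ Icc 0 t, ∑ i ∈ F, a i τ ≤ B) :
    ∑ i ∈ F, ∫ τ in (0 : ℝ)..t, k τ * a i τ ≤ B * ∫ τ in (0 : ℝ)..t, k τ := by
  have hint : ∀ i ∈ F, IntervalIntegrable (fun τ => k τ * a i τ) MeasureTheory.volume 0 t :=
    fun i hi => (hk.mul (ha i hi)).intervalIntegrable_of_Icc ht
  rw [← integral_finsetSum hint, ← integral_const_mul]
  refine integral_mono_on ht
    ((continuousOn_finsetSum F fun i hi => hk.mul (ha i hi)).intervalIntegrable_of_Icc ht)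
    ((continuousOn_const.mul hk).intervalIntegrable_of_Icc ht) fun τ hτ => ?_
  rw [← Finset.mul_sum, mul_comm]
  exact mul_le_mul_of_nonneg_right (hB τ hτ) (hk₀ τ hτ)

lemma duhamel_mode_le {E : Type*} [NormedAddCommGroup E] [NormedSpace ℝ E] {d : ℕ} (i₀ : Fin d)
    {ε r t : ℝ} (hε : 0 ≤ ε) (hr₀ : 0 ≤ r) (hr₃ : r ≤ 3) (ht : 0 ≤ t) (K : Fin d → ℤ)
    {φ : ℝ → E} (hφ : ContinuousOn φ (Icc 0 t)) :
    (if ε * √(∑ i, ((K i : ℝ)) ^ 2) ≤ 1 / 10 then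
      ‖∫ τ in (0 : ℝ)..t,
        (exp ((-(1 - (1 + ε * (K i₀ : ℝ)) ^ 2) ^ 2
              - 4 * ∑ i ∈ Finset.univ.filter (fun i => i ≠ i₀), (ε * (K i : ℝ)) ^ 2) * (t - τ))
            * (-4 * ε ^ 4 * (K i₀ : ℝ) ^ 3 - ε ^ 5 * (K i₀ : ℝ) ^ 4)) • φ τ‖
    else 0) ≤ 10 * exp 1 * ε ^ (1 + r)
      * ∫ τ in (0 : ℝ)..t, (1 + (t - τ)) ^ (-((3 - r) / 2)) * (‖φ τ‖ * wt d r K) := by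
  split_ifs with hK
  · have hεc : |ε * K i₀| ≤ 1 := by
      have hcoord := abs_le_sqrt
        (Finset.single_le_sum (fun j _ => sq_nonneg ((K j : ℝ))) (Finset.mem_univ i₀))
      rw [abs_mul, abs_of_nonneg hε]
      nlinarith
    calc _ ≤ 10 * exp 1 * ε ^ (1 + r) * |(K i₀ : ℝ)| ^ r
          * ∫ τ in (0 : ℝ)..t, (1 + (t - τ)) ^ (-((3 - r) / 2)) * ‖φ τ‖ :=
          norm_integral_duhamel_le hε hεc (by positivity) (by linarith) hr₃ ht hφ
      _ ≤ 10 * exp 1 * ε ^ (1 + r) * wt d r K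
          * ∫ τ in (0 : ℝ)..t, (1 + (t - τ)) ^ (-((3 - r) / 2)) * ‖φ τ‖ := by
          gcongr
          · exact integral_nonneg ht fun τ hτ =>
              mul_nonneg (one_add_sub_rpow_nonneg hτ.2 _) (norm_nonneg _)
          · exact abs_rpow_le_wt hr₀ K i₀
      _ = _ := by
          rw [mul_assoc, ← integral_const_mul]
          congr 2 with τ
          ring
  · exact mul_nonneg (by positivity) (integral_nonneg ht fun τ hτ =>
      mul_nonneg (one_add_sub_rpow_nonneg hτ.2 _) (mul_nonneg (norm_nonneg _) (wt_pos d r K).le))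

theorem critical_linear_residual_Z_general (d : ℕ) (hd : 0 < d)
    (δ T₀ CZ : ℝ) (hδ0 : 0 < δ) (hδ1 : δ < 1) (hCZ : 0 < CZ) :
    ∃ C > 0, ∃ ε₀ ∈ Set.Ioc (0 : ℝ) 1, ∀ ε ∈ Set.Ioc (0 : ℝ) ε₀,
      ∀ Z : ℝ → (Fin d → ℤ) → ℂ,
        NormContOn d (1 - δ / 2) T₀ Z →
        (∀ T ∈ Set.Icc (0 : ℝ) T₀, Summable (fun K => ‖Z T K‖ * wt d (1 - δ / 2) K)) →
        (∀ T ∈ Set.Icc (0 : ℝ) T₀,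
          ∑' K : Fin d → ℤ, ‖Z T K‖ * wt d (1 - δ / 2) K ≤ CZ) →
        ∀ t ∈ Set.Icc (0 : ℝ) (T₀ / ε ^ 2),
          (∑' K : Fin d → ℤ,
            if ε * Real.sqrt (∑ i, ((K i : ℝ)) ^ 2) ≤ 1 / 10 then
              ‖∫ τ in (0 : ℝ)..t,
                (Real.exp ((-(1 - (1 + ε * (K ⟨0, hd⟩ : ℝ)) ^ 2) ^ 2
                      - 4 * ∑ i ∈ Finset.univ.filter (fun i => i ≠ (⟨0, hd⟩ : Fin d)),
                          (ε * (K i : ℝ)) ^ 2) * (t - τ))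
                    * (-4 * ε ^ 4 * (K ⟨0, hd⟩ : ℝ) ^ 3
                      - ε ^ 5 * (K ⟨0, hd⟩ : ℝ) ^ 4)) • Z (ε ^ 2 * τ) K‖
            else 0) ≤ C * ε ^ (2 - 3 * δ / 2) := by
  refine ⟨40 * exp 1 * CZ / δ, by positivity, 1, ⟨one_pos, le_rfl⟩, ?_⟩
  rintro ε ⟨hε₀, hε₁⟩ Z hZc hZs hZb t ⟨ht₀, htT⟩
  set r := 1 - δ / 2 with hr
  have hmaps : MapsTo (fun τ => ε ^ 2 * τ) (Icc 0 t) (Icc 0 T₀) := fun τ hτ =>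
    ⟨mul_nonneg (sq_nonneg ε) hτ.1,
      (mul_le_mul_of_nonneg_left hτ.2 (sq_nonneg ε)).trans ((le_div_iff₀' (by positivity)).1 htT)⟩
  have hZK : ∀ K, ContinuousOn (fun τ => Z (ε ^ 2 * τ) K) (Icc 0 t) := fun K =>
    (hZc.continuousOn_apply hZs K).comp (by fun_prop) hmaps
  have hmass : ∀ F : Finset (Fin d → ℤ), ∀ τ ∈ Icc 0 t,
      ∑ K ∈ F, ‖Z (ε ^ 2 * τ) K‖ * wt d r K ≤ CZ := fun F τ hτ =>
    ((hZs _ (hmaps hτ)).sum_le_tsum F fun K _ =>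
      mul_nonneg (norm_nonneg _) (wt_pos d r K).le).trans (hZb _ (hmaps hτ))
  have htime : ∫ τ in (0 : ℝ)..t, (1 + (t - τ)) ^ (-((3 - r) / 2)) ≤ 4 / δ :=
    (integral_one_add_sub_rpow_neg_le (by linarith) ht₀).trans_eq
      (by rw [show (3 - r) / 2 - 1 = δ / 4 by rw [hr]; ring, one_div_div])
  calc _ ≤ 10 * exp 1 * ε ^ (1 + r)
        * (CZ * ∫ τ in (0 : ℝ)..t, (1 + (t - τ)) ^ (-((3 - r) / 2))) := by
        refine Real.tsum_le_of_sum_le (fun K => by split_ifs <;> positivity) fun F => ?_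
        refine (Finset.sum_le_sum fun K _ => duhamel_mode_le ⟨0, hd⟩ (r := r) hε₀.le
          (by linarith) (by linarith) ht₀ K (hZK K)).trans ?_
        rw [← Finset.mul_sum]
        exact mul_le_mul_of_nonneg_left (sum_integral_mul_le F ht₀
          (continuousOn_one_add_sub_rpow t _) (fun τ hτ => one_add_sub_rpow_nonneg hτ.2 _)
          (fun K _ => (hZK K).norm.mul continuousOn_const) (hmass F)) (by positivity)
    _ ≤ 10 * exp 1 * ε ^ (1 + r) * (CZ * (4 / δ)) := by gcongr
    _ ≤ 10 * exp 1 * ε ^ (2 - 3 * δ / 2) * (CZ * (4 / δ)) := by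
        have hrate : ε ^ (1 + r) ≤ ε ^ (2 - 3 * δ / 2) :=
          rpow_le_rpow_of_exponent_ge hε₀ hε₁ (by linarith)
        gcongr
    _ = 40 * exp 1 * CZ / δ * ε ^ (2 - 3 * δ / 2) := by ring

/-- the critical-mode Duhamel contribution of the linear residual
term involving the low-regularity Ornstein–Uhlenbeck part `Ẑ ∈ ℓ¹_{1−δ/2}` is
`O(ε^{2−3δ/2})` on `[0, T₀/ε²]`. -/
theorem critical_linear_residual_Z (d : ℕ) (hd : 0 < d)
    (δ T₀ CZ : ℝ) (hδ0 : 0 < δ) (hδ1 : δ < 1) (hT₀ : 0 < T₀) (hCZ : 0 < CZ) :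
    ∃ C > 0, ∃ ε₀ ∈ Set.Ioc (0 : ℝ) 1, ∀ ε ∈ Set.Ioc (0 : ℝ) ε₀,
      ∀ Z : ℝ → (Fin d → ℤ) → ℂ,
        NormContOn d (1 - δ / 2) T₀ Z →
        (∀ T ∈ Set.Icc (0 : ℝ) T₀, Summable (fun K => ‖Z T K‖ * wt d (1 - δ / 2) K)) →
        (∀ T ∈ Set.Icc (0 : ℝ) T₀,
          ∑' K : Fin d → ℤ, ‖Z T K‖ * wt d (1 - δ / 2) K ≤ CZ) →
        ∀ t ∈ Set.Icc (0 : ℝ) (T₀ / ε ^ 2),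
          (∑' K : Fin d → ℤ,
            if ε * Real.sqrt (∑ i, ((K i : ℝ)) ^ 2) ≤ 1 / 10 then
              ‖∫ τ in (0 : ℝ)..t,
                (Real.exp ((-(1 - (1 + ε * (K ⟨0, hd⟩ : ℝ)) ^ 2) ^ 2
                      - 4 * ∑ i ∈ Finset.univ.filter (fun i => i ≠ (⟨0, hd⟩ : Fin d)),
                          (ε * (K i : ℝ)) ^ 2) * (t - τ))
                    * (-4 * ε ^ 4 * (K ⟨0, hd⟩ : ℝ) ^ 3
                      - ε ^ 5 * (K ⟨0, hd⟩ : ℝ) ^ 4)) • Z (ε ^ 2 * τ) K‖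
            else 0) ≤ C * ε ^ (2 - 3 * δ / 2) :=
  critical_linear_residual_Z_general d hd δ T₀ CZ hδ0 hδ1 hCZ
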